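/- arXiv:2309.03430 — 2 statements merged into one kernel-verified Lean document; each statement's English description precedes it below -/
import Mathlib

section
/- Let a > 0, λ1, λ2 with 0 > λ1 > λ2, and set d = λ1·λ2 and τ = λ1 + λ2. Define y0(t) = a·ψ(t)/(d·(e^{λ1 t} - e^{λ2 t})) for t > 0, where ψ(t) = λ1 - λ2 + λ2·e^{λ1 t} - λ1·e^{λ2 t}. Then y0 is strictly increasing on (0, +∞), with y0(t) → 0 as t → 0⁺ and y0(t) → +∞ as t → +∞. -/
noncomputable def psi (l1 l2 t : ℝ) : ℝ :=
  l1 - l2 + l2 * Real.exp (l1 * t) - l1 * Real.exp (l2 * t)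

noncomputable def y0fun (a l1 l2 t : ℝ) : ℝ :=
  a * psi l1 l2 t / (l1 * l2 * (Real.exp (l1 * t) - Real.exp (l2 * t)))

/-!
Put `x = exp ((λ₁ - λ₂) t)` and `p = λ₂ / (λ₂ - λ₁) > 1`, so that `x ^ p = exp (-λ₂ t)`. Then
`y0 = a / λ₁ + (a (λ₁ - λ₂) / d) · (x ^ p - 1) / (x - 1)`, and the last factor is the slope of the
secant of the strictly convex `x ↦ x ^ p` through `1`. It increases with `x`, hence with `t`, and
tends to the derivative `p` as `t → 0⁺`, which makes `y0 → 0`. As `t → +∞`, the numerator `a ψ`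
tends to `a (λ₁ - λ₂) > 0` while the denominator `d (e^{λ₁ t} - e^{λ₂ t})` tends to `0⁺`.
-/

open Real Filter Set Topology

theorem strictMonoOn_slope_rpow_one {p : ℝ} (hp : 1 < p) :
    StrictMonoOn (slope (fun x : ℝ => x ^ p) 1) (Ioi 1) := by
  intro x hx y hy hxy
  simp only [slope_def_field]
  exact (strictConvexOn_rpow hp).secant_strict_mono (mem_Ici.2 zero_le_one)
    (mem_Ici.2 (by linarith [mem_Ioi.1 hx])) (mem_Ici.2 (by linarith [mem_Ioi.1 hy]))
    hx.ne' hy.ne' hxy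

theorem tendsto_slope_rpow_one (p : ℝ) :
    Tendsto (slope (fun x : ℝ => x ^ p) 1) (𝓝[≠] 1) (𝓝 p) := by
  simpa using (hasDerivAt_rpow_const (x := 1) (p := p) (Or.inl one_ne_zero)).tendsto_slope

section
variable {a l1 l2 : ℝ}

theorem y0fun_eq_add_mul_slope {t : ℝ} (hl1 : l1 ≠ 0) (hl2 : l2 ≠ 0) (hl12 : l2 - l1 ≠ 0)
    (ht : t ≠ 0) :
    y0fun a l1 l2 t = a / l1 + a * (l1 - l2) / (l1 * l2) *
      slope (fun x : ℝ => x ^ (l2 / (l2 - l1))) 1 (exp ((l1 - l2) * t)) := by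
  have hpow : exp ((l1 - l2) * t) ^ (l2 / (l2 - l1)) = exp (-(l2 * t)) := by
    rw [← exp_mul]; congr 1; field_simp; ring
  have hne : exp (l1 * t) - exp (l2 * t) ≠ 0 := by
    rw [sub_ne_zero, Ne, exp_eq_exp]
    exact fun h => hl12 (sub_eq_zero.2 (mul_right_cancel₀ ht h).symm)
  rw [slope_def_field, one_rpow, hpow, exp_neg, sub_mul, exp_sub, y0fun, psi]
  field_simp
  ring

theorem strictMonoOn_y0fun (ha : 0 < a) (h1 : l1 < 0) (h2 : l2 < l1) :
    StrictMonoOn (y0fun a l1 l2) (Ioi 0) := by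
  have hl2 : l2 ≠ 0 := (h2.trans h1).ne
  have hl12 : l2 - l1 ≠ 0 := sub_ne_zero.2 h2.ne
  have hp : 1 < l2 / (l2 - l1) := by rw [one_lt_div_of_neg] <;> linarith
  have hk : 0 < a * (l1 - l2) / (l1 * l2) :=
    div_pos (mul_pos ha (sub_pos.2 h2)) (mul_pos_of_neg_of_neg h1 (h2.trans h1))
  have hexp : StrictMonoOn (fun t => exp ((l1 - l2) * t)) (Ioi 0) :=
    (exp_strictMono.comp (strictMono_mul_left_of_pos (sub_pos.2 h2))).strictMonoOn _
  intro s hs t ht hst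
  rw [y0fun_eq_add_mul_slope h1.ne hl2 hl12 hs.ne',
    y0fun_eq_add_mul_slope h1.ne hl2 hl12 ht.ne']
  gcongr
  exact strictMonoOn_slope_rpow_one hp (one_lt_exp_iff.2 (mul_pos (sub_pos.2 h2) hs))
    (one_lt_exp_iff.2 (mul_pos (sub_pos.2 h2) ht)) (hexp hs ht hst)

theorem tendsto_y0fun_nhdsGT_zero (h1 : l1 < 0) (h2 : l2 < l1) :
    Tendsto (y0fun a l1 l2) (𝓝[>] 0) (𝓝 0) := by
  have hl1 : l1 ≠ 0 := h1.ne
  have hl2 : l2 ≠ 0 := (h2.trans h1).ne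
  have hl12 : l2 - l1 ≠ 0 := sub_ne_zero.2 h2.ne
  have hexp : Tendsto (fun t => exp ((l1 - l2) * t)) (𝓝[>] 0) (𝓝[≠] 1) := by
    refine tendsto_nhdsWithin_of_tendsto_nhds_of_eventually_within _ ?_ ?_
    · simpa using ((continuous_const.mul continuous_id).rexp.tendsto 0).mono_left
        (nhdsWithin_le_nhds (a := (0 : ℝ)) (s := Ioi 0))
    · filter_upwards [self_mem_nhdsWithin] with t ht
      exact (one_lt_exp_iff.2 (mul_pos (sub_pos.2 h2) ht)).ne'
  have hlim := ((tendsto_slope_rpow_one (l2 / (l2 - l1))).comp hexp).const_mul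
    (a * (l1 - l2) / (l1 * l2)) |>.const_add (a / l1)
  have hzero : a / l1 + a * (l1 - l2) / (l1 * l2) * (l2 / (l2 - l1)) = 0 := by
    field_simp; ring
  rw [hzero] at hlim
  refine hlim.congr' ?_
  filter_upwards [self_mem_nhdsWithin] with t ht
  exact (y0fun_eq_add_mul_slope hl1 hl2 hl12 ht.ne').symm

theorem tendsto_y0fun_atTop (ha : 0 < a) (h1 : l1 < 0) (h2 : l2 < l1) :
    Tendsto (y0fun a l1 l2) atTop atTop := by
  have hu : Tendsto (fun t => exp (l1 * t)) atTop (𝓝 0) :=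
    tendsto_exp_atBot.comp (tendsto_id.const_mul_atTop_of_neg h1)
  have hv : Tendsto (fun t => exp (l2 * t)) atTop (𝓝 0) :=
    tendsto_exp_atBot.comp (tendsto_id.const_mul_atTop_of_neg (h2.trans h1))
  have hnum : Tendsto (fun t => a * psi l1 l2 t) atTop (𝓝 (a * (l1 - l2))) := by
    simpa [psi] using
      (((tendsto_const_nhds (x := l1 - l2)).add (hu.const_mul l2)).sub (hv.const_mul l1)).const_mul a
  have hden : Tendsto (fun t => l1 * l2 * (exp (l1 * t) - exp (l2 * t))) atTop (𝓝[>] 0) := by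
    refine tendsto_nhdsWithin_of_tendsto_nhds_of_eventually_within _
      (by simpa using (hu.sub hv).const_mul (l1 * l2)) ?_
    filter_upwards [eventually_gt_atTop 0] with t ht
    exact mul_pos (mul_pos_of_neg_of_neg h1 (h2.trans h1))
      (sub_pos.2 (exp_lt_exp.2 (mul_lt_mul_of_pos_right h2 ht)))
  exact (hnum.pos_mul_atTop (mul_pos ha (sub_pos.2 h2)) hden.inv_tendsto_nhdsGT_zero).congr
    fun t => (div_eq_mul_inv _ _).symm

end

theorem y0_increasing_and_limits (a l1 l2 : ℝ) (ha : a > 0) (h1 : 0 > l1) (h2 : l1 > l2) :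
    StrictMonoOn (fun t => y0fun a l1 l2 t) (Set.Ioi 0) ∧
    Filter.Tendsto (fun t => y0fun a l1 l2 t) (nhdsWithin 0 (Set.Ioi 0)) (nhds 0) ∧
    Filter.Tendsto (fun t => y0fun a l1 l2 t) Filter.atTop Filter.atTop :=
  ⟨strictMonoOn_y0fun ha h1 h2, tendsto_y0fun_nhdsGT_zero h1 h2, tendsto_y0fun_atTop ha h1 h2⟩
end

section
/- Let a > 0 and 0 > λ1 > λ2, d = λ1·λ2. Define y1(t) = -a·e^{(λ1+λ2)t}·ψ(-t)/(d·(e^{λ1 t} - e^{λ2 t})) for t > 0, where ψ(s) = λ1 - λ2 + λ2·e^{λ1 s} - λ1·e^{λ2 s}. Then y1 is strictly decreasing on (0, +∞), with y1(t) → 0 as t → 0⁺ and y1(t) → a/λ2 as t → +∞. -/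
noncomputable def y1fun (a l1 l2 t : ℝ) : ℝ :=
  -a * Real.exp ((l1 + l2) * t) * psi l1 l2 (-t) /
    (l1 * l2 * (Real.exp (l1 * t) - Real.exp (l2 * t)))

/-!
Write `S x = (exp x - 1) / x`, i.e. `slope exp 0 x`. Clearing denominators gives
`y1 t = (a / λ₂) * (1 - S (λ₁ t) / S ((λ₁ - λ₂) t))`. By strict convexity of `exp`, `S` is positive
and strictly increasing on `x ≠ 0`, so for `λ₁ < 0 < λ₁ - λ₂` the ratio is strictly decreasing in
`t > 0`, while `a / λ₂ < 0`. The ratio tends to `1` as `t → 0⁺` since `S → exp' 0 = 1`, and to `0`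
as `t → ∞` since `S → 0` at `-∞` and `S → ∞` at `+∞`.
-/

open Real Filter Set Topology

namespace Real

lemma slope_exp_zero_pos {x : ℝ} (hx : x ≠ 0) : 0 < slope exp 0 x :=
  (exp_strictMono.strictMonoOn univ).slope_pos (mem_univ _) (mem_univ _) hx.symm

lemma slope_exp_zero_strictMonoOn : StrictMonoOn (slope exp 0) {0}ᶜ := by
  intro x hx y hy hxy
  simpa only [slope_def_field] using
    strictConvexOn_exp.secant_strict_mono (mem_univ 0) (mem_univ x) (mem_univ y) hx hy hxy

lemma tendsto_slope_exp_zero_nhdsNE : Tendsto (slope exp 0) (𝓝[≠] 0) (𝓝 1) := by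
  simpa using hasDerivAt_iff_tendsto_slope.1 (hasDerivAt_exp 0)

lemma tendsto_slope_exp_zero_atBot : Tendsto (slope exp 0) atBot (𝓝 0) := by
  refine ((tendsto_exp_atBot.sub_const 1).div_atBot tendsto_id).congr fun x => ?_
  simp [slope_def_field]

lemma tendsto_slope_exp_zero_atTop : Tendsto (slope exp 0) atTop atTop := by
  refine (tendsto_mul_exp_add_div_pow_atTop 1 (-1) 1 one_pos).congr fun x => ?_
  simp [slope_def_field, sub_eq_add_neg]

end Real

section ExpSlopeRatio

variable {c r : ℝ}

lemma strictAntiOn_slope_exp_zero_div (hc : c < 0) (hr : 0 < r) :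
    StrictAntiOn (fun t => slope exp 0 (c * t) / slope exp 0 (r * t)) (Ioi 0) := by
  intro s (hs : 0 < s) t (ht : 0 < t) hst
  have hnum : slope exp 0 (c * t) < slope exp 0 (c * s) :=
    slope_exp_zero_strictMonoOn (mul_neg_of_neg_of_pos hc ht).ne
      (mul_neg_of_neg_of_pos hc hs).ne (mul_lt_mul_of_neg_left hst hc)
  have hden : slope exp 0 (r * s) < slope exp 0 (r * t) :=
    slope_exp_zero_strictMonoOn (mul_pos hr hs).ne' (mul_pos hr ht).ne'
      (mul_lt_mul_of_pos_left hst hr)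
  exact div_lt_div₀ hnum hden.le (slope_exp_zero_pos (mul_neg_of_neg_of_pos hc hs).ne).le
    (slope_exp_zero_pos (mul_pos hr hs).ne')

lemma tendsto_const_mul_nhdsNE_zero (hc : c ≠ 0) :
    Tendsto (fun t : ℝ => c * t) (𝓝[≠] 0) (𝓝[≠] 0) := by
  refine tendsto_nhdsWithin_of_tendsto_nhds_of_eventually_within _ ?_ ?_
  · simpa using (continuous_const_mul c).continuousWithinAt (s := {0}ᶜ) (x := 0) |>.tendsto
  · filter_upwards [self_mem_nhdsWithin] with t ht using mul_ne_zero hc ht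

lemma tendsto_slope_exp_zero_div_nhdsGT (hc : c ≠ 0) (hr : r ≠ 0) :
    Tendsto (fun t => slope exp 0 (c * t) / slope exp 0 (r * t)) (𝓝[>] 0) (𝓝 1) := by
  have hlim (k : ℝ) (hk : k ≠ 0) : Tendsto (fun t => slope exp 0 (k * t)) (𝓝[>] 0) (𝓝 1) :=
    (tendsto_slope_exp_zero_nhdsNE.comp (tendsto_const_mul_nhdsNE_zero hk)).mono_left
      (nhdsGT_le_nhdsNE 0)
  have := (hlim c hc).div (hlim r hr) one_ne_zero
  rwa [div_one] at this

lemma tendsto_slope_exp_zero_div_atTop (hc : c < 0) (hr : 0 < r) :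
    Tendsto (fun t => slope exp 0 (c * t) / slope exp 0 (r * t)) atTop (𝓝 0) :=
  (tendsto_slope_exp_zero_atBot.comp (tendsto_id.const_mul_atTop_of_neg hc)).div_atTop
    (tendsto_slope_exp_zero_atTop.comp (tendsto_id.const_mul_atTop hr))

end ExpSlopeRatio

lemma y1fun_eq_slope_exp_zero_div {a l1 l2 t : ℝ} (h1 : l1 < 0) (h2 : l2 < l1) (ht : 0 < t) :
    y1fun a l1 l2 t = a / l2 * (1 - slope exp 0 (l1 * t) / slope exp 0 ((l1 - l2) * t)) := by
  have hl1 : l1 ≠ 0 := h1.ne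
  have hl2 : l2 ≠ 0 := by linarith
  have hrt : l1 * t - l2 * t ≠ 0 := by nlinarith
  have hlt : exp (l2 * t) < exp (l1 * t) := exp_lt_exp.2 (mul_lt_mul_of_pos_right h2 ht)
  have hv : 0 < exp (l2 * t) := exp_pos _
  simp only [y1fun, psi, slope_def_field, exp_zero, sub_zero]
  rw [sub_mul, exp_sub, add_mul, exp_add, mul_neg, mul_neg, exp_neg, exp_neg]
  generalize exp (l1 * t) = u, exp (l2 * t) = v at *
  have hu : u ≠ 0 := (hv.trans hlt).ne'
  have huv : u - v ≠ 0 := sub_ne_zero.2 hlt.ne'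
  field_simp
  ring

theorem y1_decreasing_and_limits (a l1 l2 : ℝ) (ha : a > 0) (h1 : 0 > l1) (h2 : l1 > l2) :
    StrictAntiOn (fun t => y1fun a l1 l2 t) (Set.Ioi 0) ∧
    Filter.Tendsto (fun t => y1fun a l1 l2 t) (nhdsWithin 0 (Set.Ioi 0)) (nhds 0) ∧
    Filter.Tendsto (fun t => y1fun a l1 l2 t) Filter.atTop (nhds (a / l2)) := by
  set R := fun t => slope exp 0 (l1 * t) / slope exp 0 ((l1 - l2) * t)
  have hr : 0 < l1 - l2 := sub_pos.2 h2
  have hy : EqOn (fun t => a / l2 * (1 - R t)) (y1fun a l1 l2) (Ioi 0) := fun t ht =>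
    (y1fun_eq_slope_exp_zero_div h1 h2 ht).symm
  have hcoef : a / l2 < 0 := div_neg_of_pos_of_neg ha (h2.trans h1)
  refine ⟨?_, ?_, ?_⟩
  · refine StrictAntiOn.congr (fun s hs t ht hst => ?_) hy
    exact mul_lt_mul_of_neg_left
      (sub_lt_sub_left (strictAntiOn_slope_exp_zero_div h1 hr hs ht hst) 1) hcoef
  · have := ((tendsto_slope_exp_zero_div_nhdsGT h1.ne hr.ne').const_sub 1).const_mul (a / l2)
    rw [sub_self, mul_zero] at this
    exact this.congr' (eventuallyEq_nhdsWithin_of_eqOn hy)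
  · have := ((tendsto_slope_exp_zero_div_atTop h1 hr).const_sub 1).const_mul (a / l2)
    rw [sub_zero, mul_one] at this
    exact this.congr' ((eventually_gt_atTop 0).mono hy)
end
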